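/- arXiv:1808.04726 — 5 statements merged into one kernel-verified Lean document; each statement's English description precedes it below -/
import Mathlib

section
/- Let $F(x,y) = \alpha_0 x^3 + \alpha_1 x^2 y + \alpha_2 x y^2 + \alpha_3 y^3$ be a binary cubic over the ring of integers $\mathcal{O}_K$ of a number field, with Hessian $H$ and Jacobian covariant $G$ as above, and set $T(x,y) = \alpha_1 x - \alpha_2 y$. Then the polynomials $(T^2 + H)/3$ and $(T^3 + 3TH + G)/27$ have coefficients in $\mathcal{O}_K$. -/
open MvPolynomial NumberField

private lemma pderiv_ofNat {σ R : Type*} [CommSemiring R] (i : σ) (n : ℕ) [n.AtLeastTwo] :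
    MvPolynomial.pderiv i (OfNat.ofNat n : MvPolynomial σ R) = 0 := by
  rw [← Nat.cast_ofNat]; exact Derivation.map_natCast _ n

set_option maxHeartbeats 4000000 in
/-- **Integrality of the Frey curve coefficients.** Let
`F(x,y) = α₀x³ + α₁x²y + α₂xy² + α₃y³` be a binary cubic over the ring of integers `𝓞 K`
of a number field, with Hessian `H` (characterized integrally by `4H = F_{xx}F_{yy} - F_{xy}²`),
Jacobian covariant `G = F_x H_y - F_y H_x`, and `T(x,y) = α₁x - α₂y`. Then the polynomials
`(T² + H)/3` and `(T³ + 3TH + G)/27` have coefficients in `𝓞 K`, i.e. there exist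
polynomials `P, Q` over `𝓞 K` with `3P = T² + H` and `27Q = T³ + 3TH + G`. -/
theorem frey_coefficients_integral (K : Type*) [Field K] [NumberField K]
    (α₀ α₁ α₂ α₃ : 𝓞 K)
    (F : MvPolynomial (Fin 2) (𝓞 K))
    (hF : F = C α₀ * X 0 ^ 3 + C α₁ * X 0 ^ 2 * X 1 + C α₂ * X 0 * X 1 ^ 2 + C α₃ * X 1 ^ 3)
    (H : MvPolynomial (Fin 2) (𝓞 K))
    (hH : C 4 * H = pderiv 0 (pderiv 0 F) * pderiv 1 (pderiv 1 F) - pderiv 1 (pderiv 0 F) ^ 2)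
    (G : MvPolynomial (Fin 2) (𝓞 K))
    (hG : G = pderiv 0 F * pderiv 1 H - pderiv 1 F * pderiv 0 H)
    (T : MvPolynomial (Fin 2) (𝓞 K))
    (hT : T = C α₁ * X 0 - C α₂ * X 1) :
    (∃ P : MvPolynomial (Fin 2) (𝓞 K), C 3 * P = T ^ 2 + H) ∧
      (∃ Q : MvPolynomial (Fin 2) (𝓞 K), C 27 * Q = T ^ 3 + 3 * T * H + G) := by
  subst hF hT
  have h4 : (C 4 : MvPolynomial (Fin 2) (𝓞 K)) ≠ 0 := by
    simp only [ne_eq, MvPolynomial.C_eq_zero]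
    norm_num
  have hH' : H = C (3 * α₀ * α₂ - α₁ ^ 2) * X 0 ^ 2
      + C (9 * α₀ * α₃ - α₁ * α₂) * X 0 * X 1
      + C (3 * α₁ * α₃ - α₂ ^ 2) * X 1 ^ 2 := by
    apply mul_left_cancel₀ h4
    rw [hH]
    simp only [map_add, map_sub, pderiv_C_mul, pderiv_mul, pderiv_pow, pderiv_X_self,
      pderiv_X_of_ne (show (0 : Fin 2) ≠ 1 by decide),
      pderiv_X_of_ne (show (1 : Fin 2) ≠ 0 by decide), pderiv_C, pderiv_one, Derivation.map_natCast,
      mul_zero, zero_mul, add_zero, zero_add, mul_one, one_mul]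
    push_cast
    simp only [map_mul, map_pow, map_sub, map_add, map_ofNat]
    ring
  subst hH' hG
  constructor
  · exact ⟨C (α₀ * α₂) * X 0 ^ 2 + C (3 * α₀ * α₃ - α₁ * α₂) * X 0 * X 1
      + C (α₁ * α₃) * X 1 ^ 2, by simp only [map_mul, map_pow, map_sub, map_add, map_ofNat]; ring⟩
  · refine ⟨C (α₀ ^ 2 * α₃) * X 0 ^ 3 + C (2 * α₀ * α₁ * α₃ - α₀ * α₂ ^ 2) * X 0 ^ 2 * X 1
      + C (α₁ ^ 2 * α₃ - 2 * α₀ * α₂ * α₃) * X 0 * X 1 ^ 2 - C (α₀ * α₃ ^ 2) * X 1 ^ 3, ?_⟩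
    simp only [map_add, map_sub, pderiv_C_mul, pderiv_mul, pderiv_pow, pderiv_X_self,
      pderiv_X_of_ne (show (0 : Fin 2) ≠ 1 by decide),
      pderiv_X_of_ne (show (1 : Fin 2) ≠ 0 by decide), pderiv_C, pderiv_one, Derivation.map_natCast,
      mul_zero, zero_mul, add_zero, zero_add, mul_one, one_mul]
    push_cast
    simp only [map_mul, map_pow, map_sub, map_add, map_ofNat]
    ring
end

section
/- Let $F \in \mathcal{O}_K[x,y]$ be a binary cubic with nonzero discriminant $\Delta_F$, Hessian $H$, Jacobian covariant $G$, and $T = \alpha_1 x - \alpha_2 y$. For $x_0, y_0 \in \mathcal{O}_K$ with $F(x_0,y_0) \neq 0$, the Weierstrass curve $E_{x_0,y_0}: Y^2 = X^3 + T X^2 + \frac{T^2+H}{3} X + \frac{T^3 + 3TH + G}{27}$ (with $T = T(x_0,y_0)$ etc.) is an elliptic curve with discriminant $\Delta = 2^4 \Delta_F F(x_0,y_0)^2$ and invariants $c_4 = -2^4 H(x_0,y_0)$, $c_6 = -2^5 G(x_0,y_0)$. -/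
open MvPolynomial NumberField

/-!
Write `h`, `g` for the values of the Hessian and Jacobian covariants at `P`. The curve
`Y² = X³ + tX² + ((t² + h)/3)X + (t³ + 3th + g)/27` is the translate `X ↦ X + t/3` of the short
curve `Y² = X³ + (h/3)X + g/27`, so `c₄ = -16h`, `c₆ = -32g` and `27Δ = -16(4h³ + g²)` whatever
`t` is. The classical syzygy `4H³ + G² = -27 Δ_F F²` between the covariants of a binary cubic
then gives `Δ = 2⁴ Δ_F F(P)²`, which is nonzero when `Δ_F` and `F(P)` are.
-/

noncomputable section BinaryForms

variable {R : Type*} [CommRing R]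

def binaryLinear (b₀ b₁ : R) : MvPolynomial (Fin 2) R := C b₀ * X 0 + C b₁ * X 1

def binaryQuadratic (b₀ b₁ b₂ : R) : MvPolynomial (Fin 2) R :=
  C b₀ * X 0 ^ 2 + C b₁ * X 0 * X 1 + C b₂ * X 1 ^ 2

def binaryCubic (a₀ a₁ a₂ a₃ : R) : MvPolynomial (Fin 2) R :=
  C a₀ * X 0 ^ 3 + C a₁ * X 0 ^ 2 * X 1 + C a₂ * X 0 * X 1 ^ 2 + C a₃ * X 1 ^ 3

variable (a₀ a₁ a₂ a₃ b₀ b₁ b₂ : R)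

lemma pderiv_zero_X_one : pderiv 0 (X 1 : MvPolynomial (Fin 2) R) = 0 :=
  pderiv_X_of_ne (by decide)

lemma pderiv_one_X_zero : pderiv 1 (X 0 : MvPolynomial (Fin 2) R) = 0 :=
  pderiv_X_of_ne (by decide)

lemma pderiv_zero_binaryQuadratic :
    pderiv 0 (binaryQuadratic b₀ b₁ b₂) = binaryLinear (2 * b₀) b₁ := by
  simp only [binaryQuadratic, binaryLinear, map_add, map_mul, map_ofNat, Derivation.leibniz,
    pderiv_pow, pderiv_X_self, pderiv_zero_X_one, pderiv_C, smul_eq_mul]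
  ring

lemma pderiv_one_binaryQuadratic :
    pderiv 1 (binaryQuadratic b₀ b₁ b₂) = binaryLinear b₁ (2 * b₂) := by
  simp only [binaryQuadratic, binaryLinear, map_add, map_mul, map_ofNat, Derivation.leibniz,
    pderiv_pow, pderiv_X_self, pderiv_one_X_zero, pderiv_C, smul_eq_mul]
  ring

lemma pderiv_zero_binaryCubic :
    pderiv 0 (binaryCubic a₀ a₁ a₂ a₃) = binaryQuadratic (3 * a₀) (2 * a₁) a₂ := by
  simp only [binaryCubic, binaryQuadratic, map_add, map_mul, map_ofNat, Derivation.leibniz,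
    pderiv_pow, pderiv_X_self, pderiv_zero_X_one, pderiv_C, smul_eq_mul]
  ring

lemma pderiv_one_binaryCubic :
    pderiv 1 (binaryCubic a₀ a₁ a₂ a₃) = binaryQuadratic a₁ (2 * a₂) (3 * a₃) := by
  simp only [binaryCubic, binaryQuadratic, map_add, map_mul, map_ofNat, Derivation.leibniz,
    pderiv_pow, pderiv_X_self, pderiv_one_X_zero, pderiv_C, smul_eq_mul]
  ring

def cubicDisc (a₀ a₁ a₂ a₃ : R) : R :=
  18 * a₀ * a₁ * a₂ * a₃ + (a₁ * a₂) ^ 2 - 27 * (a₀ * a₃) ^ 2 - 4 * a₀ * a₂ ^ 3 - 4 * a₁ ^ 3 * a₃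

def cubicHessian (a₀ a₁ a₂ a₃ : R) : MvPolynomial (Fin 2) R :=
  binaryQuadratic (3 * a₀ * a₂ - a₁ ^ 2) (9 * a₀ * a₃ - a₁ * a₂) (3 * a₁ * a₃ - a₂ ^ 2)

def cubicJacobian (a₀ a₁ a₂ a₃ : R) : MvPolynomial (Fin 2) R :=
  binaryCubic (2 * a₁ ^ 3 - 9 * a₀ * a₁ * a₂ + 27 * a₀ ^ 2 * a₃)
    (3 * a₁ ^ 2 * a₂ - 18 * a₀ * a₂ ^ 2 + 27 * a₀ * a₁ * a₃)
    (-3 * a₁ * a₂ ^ 2 + 18 * a₁ ^ 2 * a₃ - 27 * a₀ * a₂ * a₃)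
    (-2 * a₂ ^ 3 + 9 * a₁ * a₂ * a₃ - 27 * a₀ * a₃ ^ 2)

def binaryJacobian (F H : MvPolynomial (Fin 2) R) : MvPolynomial (Fin 2) R :=
  pderiv 0 F * pderiv 1 H - pderiv 1 F * pderiv 0 H

lemma map_cubicDisc {S : Type*} [CommRing S] (f : R →+* S) :
    f (cubicDisc a₀ a₁ a₂ a₃) = cubicDisc (f a₀) (f a₁) (f a₂) (f a₃) := by
  simp [cubicDisc, map_ofNat]

lemma binaryJacobian_binaryCubic_cubicHessian :
    binaryJacobian (binaryCubic a₀ a₁ a₂ a₃) (cubicHessian a₀ a₁ a₂ a₃)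
      = cubicJacobian a₀ a₁ a₂ a₃ := by
  rw [binaryJacobian, cubicHessian, pderiv_zero_binaryCubic, pderiv_one_binaryCubic,
    pderiv_zero_binaryQuadratic, pderiv_one_binaryQuadratic]
  simp only [cubicJacobian, binaryCubic, binaryQuadratic, binaryLinear, map_add, map_sub,
    map_mul, map_neg, map_pow, map_ofNat]
  ring

theorem cubic_syzygy :
    4 * cubicHessian a₀ a₁ a₂ a₃ ^ 3 + cubicJacobian a₀ a₁ a₂ a₃ ^ 2
      = -27 * C (cubicDisc a₀ a₁ a₂ a₃) * binaryCubic a₀ a₁ a₂ a₃ ^ 2 := by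
  simp only [cubicHessian, cubicJacobian, cubicDisc, binaryCubic, binaryQuadratic, map_add,
    map_sub, map_mul, map_neg, map_pow, map_ofNat]
  ring

end BinaryForms

noncomputable section BinaryHessian

variable {K : Type*} [Field K]

def binaryHessian (F : MvPolynomial (Fin 2) K) : MvPolynomial (Fin 2) K :=
  C (1 / 4 : K) * (pderiv 0 (pderiv 0 F) * pderiv 1 (pderiv 1 F) - pderiv 1 (pderiv 0 F) ^ 2)

lemma binaryHessian_binaryCubic (h2 : (2 : K) ≠ 0) (a₀ a₁ a₂ a₃ : K) :
    binaryHessian (binaryCubic a₀ a₁ a₂ a₃) = cubicHessian a₀ a₁ a₂ a₃ := by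
  have h4 : (C (1 / 4 : K) : MvPolynomial (Fin 2) K) * 4 = 1 := by
    rw [← map_ofNat C 4, ← map_mul, one_div_mul_cancel, map_one]
    rw [show (4 : K) = 2 * 2 by norm_num]
    exact mul_ne_zero h2 h2
  calc binaryHessian (binaryCubic a₀ a₁ a₂ a₃) = C (1 / 4) * (4 * cubicHessian a₀ a₁ a₂ a₃) := by
        rw [binaryHessian, pderiv_zero_binaryCubic, pderiv_one_binaryCubic,
          pderiv_zero_binaryQuadratic, pderiv_one_binaryQuadratic, pderiv_one_binaryQuadratic]
        simp only [cubicHessian, binaryQuadratic, binaryLinear, map_sub, map_mul, map_pow,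
          map_ofNat]
        ring
    _ = cubicHessian a₀ a₁ a₂ a₃ := by rw [← mul_assoc, h4, one_mul]

end BinaryHessian

lemma twentySeven_ne_zero_of_three_ne_zero {K : Type*} [Field K] (h3 : (3 : K) ≠ 0) :
    (27 : K) ≠ 0 := by
  rw [show (27 : K) = 3 ^ 3 by norm_num]
  exact pow_ne_zero 3 h3

namespace WeierstrassCurve

variable {K : Type*} [Field K]

def ofCovariants (t h g : K) : WeierstrassCurve K :=
  ⟨0, t, 0, (t ^ 2 + h) / 3, (t ^ 3 + 3 * t * h + g) / 27⟩

def shortOfCovariants (h g : K) : WeierstrassCurve K :=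
  ⟨0, 0, 0, h / 3, g / 27⟩

instance (h g : K) : (shortOfCovariants h g).IsShortNF :=
  ⟨rfl, rfl, rfl⟩

section

variable {t h g : K} (h3 : (3 : K) ≠ 0)
include h3

lemma ofCovariants_eq_variableChange :
    ofCovariants t h g = (⟨1, t / 3, 0, 0⟩ : VariableChange K) • shortOfCovariants h g := by
  have h27 := twentySeven_ne_zero_of_three_ne_zero h3
  rw [variableChange_def, inv_one, Units.val_one, ofCovariants, shortOfCovariants]
  ext <;> dsimp only <;> field_simp <;> ring

lemma c₄_ofCovariants : (ofCovariants t h g).c₄ = -16 * h := by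
  rw [ofCovariants_eq_variableChange h3, variableChange_c₄, c₄_of_isShortNF, inv_one,
    Units.val_one, one_pow, one_mul, shortOfCovariants]
  field_simp
  ring

lemma c₆_ofCovariants : (ofCovariants t h g).c₆ = -32 * g := by
  have h27 := twentySeven_ne_zero_of_three_ne_zero h3
  rw [ofCovariants_eq_variableChange h3, variableChange_c₆, c₆_of_isShortNF, inv_one,
    Units.val_one, one_pow, one_mul, shortOfCovariants]
  field_simp
  ring

lemma Δ_ofCovariants : 27 * (ofCovariants t h g).Δ = -16 * (4 * h ^ 3 + g ^ 2) := by
  have h27 := twentySeven_ne_zero_of_three_ne_zero h3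
  rw [ofCovariants_eq_variableChange h3, variableChange_Δ, Δ_of_isShortNF, inv_one,
    Units.val_one, one_pow, one_mul, shortOfCovariants]
  field_simp
  ring

lemma Δ_ofCovariants_eval_cubic (a₀ a₁ a₂ a₃ : K) (P : Fin 2 → K) :
    (ofCovariants t (eval P (cubicHessian a₀ a₁ a₂ a₃)) (eval P (cubicJacobian a₀ a₁ a₂ a₃))).Δ
      = 2 ^ 4 * cubicDisc a₀ a₁ a₂ a₃ * eval P (binaryCubic a₀ a₁ a₂ a₃) ^ 2 := by
  have syzygy := congrArg (eval P) (cubic_syzygy a₀ a₁ a₂ a₃)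
  simp only [map_add, map_mul, map_pow, map_neg, map_ofNat, eval_C] at syzygy
  refine mul_left_cancel₀ (twentySeven_ne_zero_of_three_ne_zero h3) ?_
  rw [Δ_ofCovariants h3, syzygy]
  ring

end

end WeierstrassCurve

theorem frey_curve_invariants_general (K : Type*) [Field K] [NumberField K]
    (α₀ α₁ α₂ α₃ : 𝓞 K)
    (F : MvPolynomial (Fin 2) K)
    (hF : F = C (algebraMap (𝓞 K) K α₀) * X 0 ^ 3 + C (algebraMap (𝓞 K) K α₁) * X 0 ^ 2 * X 1
      + C (algebraMap (𝓞 K) K α₂) * X 0 * X 1 ^ 2 + C (algebraMap (𝓞 K) K α₃) * X 1 ^ 3)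
    (Δ : K)
    (hΔ : Δ = algebraMap (𝓞 K) K (18 * α₀ * α₁ * α₂ * α₃ + (α₁ * α₂) ^ 2 - 27 * (α₀ * α₃) ^ 2
        - 4 * α₀ * α₂ ^ 3 - 4 * α₁ ^ 3 * α₃))
    (hΔ0 : Δ ≠ 0)
    (H G T : MvPolynomial (Fin 2) K)
    (hH : H = C (1 / 4 : K) *
      (pderiv 0 (pderiv 0 F) * pderiv 1 (pderiv 1 F) - pderiv 1 (pderiv 0 F) ^ 2))
    (hG : G = pderiv 0 F * pderiv 1 H - pderiv 1 F * pderiv 0 H)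
    (P : Fin 2 → K)
    (hF0 : MvPolynomial.eval P F ≠ 0)
    (W : WeierstrassCurve K)
    (hW : W = ⟨0, MvPolynomial.eval P T, 0,
      (MvPolynomial.eval P T ^ 2 + MvPolynomial.eval P H) / 3,
      (MvPolynomial.eval P T ^ 3 + 3 * MvPolynomial.eval P T * MvPolynomial.eval P H
        + MvPolynomial.eval P G) / 27⟩) :
    W.Δ = 2 ^ 4 * Δ * MvPolynomial.eval P F ^ 2 ∧
      W.c₄ = -2 ^ 4 * MvPolynomial.eval P H ∧
      W.c₆ = -2 ^ 5 * MvPolynomial.eval P G ∧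
      W.IsElliptic := by
  obtain rfl : F = binaryCubic _ _ _ _ := hF
  obtain rfl : H = cubicHessian _ _ _ _ := hH.trans (binaryHessian_binaryCubic two_ne_zero _ _ _ _)
  obtain rfl : G = cubicJacobian _ _ _ _ :=
    hG.trans (binaryJacobian_binaryCubic_cubicHessian _ _ _ _)
  obtain rfl : Δ = cubicDisc _ _ _ _ := hΔ.trans (map_cubicDisc α₀ α₁ α₂ α₃ (algebraMap (𝓞 K) K))
  obtain rfl : W = .ofCovariants _ _ _ := hW
  have h3 : (3 : K) ≠ 0 := three_ne_zero
  refine ⟨WeierstrassCurve.Δ_ofCovariants_eval_cubic h3 _ _ _ _ P, ?_, ?_, ⟨?_⟩⟩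
  · rw [WeierstrassCurve.c₄_ofCovariants h3]
    norm_num
  · rw [WeierstrassCurve.c₆_ofCovariants h3]
    norm_num
  · rw [WeierstrassCurve.Δ_ofCovariants_eval_cubic h3]
    exact (mul_ne_zero (mul_ne_zero (by norm_num) hΔ0) (pow_ne_zero 2 hF0)).isUnit

/-- **Invariants of the Frey curve.** Let `F(x,y) = α₀x³ + α₁x²y + α₂xy² + α₃y³` be a
binary cubic over `𝓞 K` with nonzero discriminant `Δ_F`, Hessian `H`, Jacobian covariant
`G`, and `T = α₁x - α₂y`. For `x₀, y₀ ∈ 𝓞 K` with `F(x₀,y₀) ≠ 0`, the Weierstrass curve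
`E_{x₀,y₀} : Y² = X³ + TX² + ((T²+H)/3)X + (T³+3TH+G)/27` (covariants evaluated at
`(x₀,y₀)`) is an elliptic curve with discriminant `Δ = 2⁴·Δ_F·F(x₀,y₀)²` and invariants
`c₄ = -2⁴·H(x₀,y₀)`, `c₆ = -2⁵·G(x₀,y₀)`. -/
theorem frey_curve_invariants (K : Type*) [Field K] [NumberField K]
    (α₀ α₁ α₂ α₃ : 𝓞 K)
    (F : MvPolynomial (Fin 2) K)
    (hF : F = C (algebraMap (𝓞 K) K α₀) * X 0 ^ 3 + C (algebraMap (𝓞 K) K α₁) * X 0 ^ 2 * X 1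
      + C (algebraMap (𝓞 K) K α₂) * X 0 * X 1 ^ 2 + C (algebraMap (𝓞 K) K α₃) * X 1 ^ 3)
    (Δ : K)
    (hΔ : Δ = algebraMap (𝓞 K) K (18 * α₀ * α₁ * α₂ * α₃ + (α₁ * α₂) ^ 2 - 27 * (α₀ * α₃) ^ 2
        - 4 * α₀ * α₂ ^ 3 - 4 * α₁ ^ 3 * α₃))
    (hΔ0 : Δ ≠ 0)
    (H G T : MvPolynomial (Fin 2) K)
    (hH : H = C (1 / 4 : K) *
      (pderiv 0 (pderiv 0 F) * pderiv 1 (pderiv 1 F) - pderiv 1 (pderiv 0 F) ^ 2))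
    (hG : G = pderiv 0 F * pderiv 1 H - pderiv 1 F * pderiv 0 H)
    (hT : T = C (algebraMap (𝓞 K) K α₁) * X 0 - C (algebraMap (𝓞 K) K α₂) * X 1)
    (x₀ y₀ : 𝓞 K)
    (P : Fin 2 → K)
    (hP : P = ![algebraMap (𝓞 K) K x₀, algebraMap (𝓞 K) K y₀])
    (hF0 : MvPolynomial.eval P F ≠ 0)
    (W : WeierstrassCurve K)
    (hW : W = ⟨0, MvPolynomial.eval P T, 0,
      (MvPolynomial.eval P T ^ 2 + MvPolynomial.eval P H) / 3,
      (MvPolynomial.eval P T ^ 3 + 3 * MvPolynomial.eval P T * MvPolynomial.eval P H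
        + MvPolynomial.eval P G) / 27⟩) :
    W.Δ = 2 ^ 4 * Δ * MvPolynomial.eval P F ^ 2 ∧
      W.c₄ = -2 ^ 4 * MvPolynomial.eval P H ∧
      W.c₆ = -2 ^ 5 * MvPolynomial.eval P G ∧
      W.IsElliptic :=
  frey_curve_invariants_general K α₀ α₁ α₂ α₃ F hF Δ hΔ hΔ0 H G T hH hG P hF0 W hW
end

section
/- Let $F \in \mathcal{O}_K[x,y]$ be a binary cubic with nonzero discriminant, and let $E_{x_0,y_0}$ be the associated Frey curve for $x_0,y_0 \in \mathcal{O}_K$ with $F(x_0,y_0) \neq 0$. Then the $j$-invariant of $E_{x_0,y_0}$ equals $j = \frac{-2^8 H(x_0,y_0)^3}{\Delta_F \cdot F(x_0,y_0)^2}$. -/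
open MvPolynomial NumberField


lemma pderiv_ofNat_aux {K : Type*} [CommSemiring K] (i : Fin 2) (n : ℕ) [n.AtLeastTwo] :
    MvPolynomial.pderiv i (no_index (OfNat.ofNat n) : MvPolynomial (Fin 2) K) = 0 := by
  rw [← map_ofNat (MvPolynomial.C : K →+* MvPolynomial (Fin 2) K) n, MvPolynomial.pderiv_C]

set_option maxHeartbeats 1000000 in
/-- **Invariants of the Frey curve.** Let `F(x,y) = α₀x³ + α₁x²y + α₂xy² + α₃y³` be a
binary cubic over `𝓞 K` with nonzero discriminant `Δ_F`, Hessian `H`, Jacobian covariant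
`G`, and `T = α₁x - α₂y`. For `x₀, y₀ ∈ 𝓞 K` with `F(x₀,y₀) ≠ 0`, the Weierstrass curve
`E_{x₀,y₀} : Y² = X³ + TX² + ((T²+H)/3)X + (T³+3TH+G)/27` (covariants evaluated at
`(x₀,y₀)`) has `j`-invariant `c₄³/Δ = -2⁸·H(x₀,y₀)³ / (Δ_F·F(x₀,y₀)²)`. -/
theorem frey_curve_j_invariant (K : Type*) [Field K] [NumberField K]
    (α₀ α₁ α₂ α₃ : 𝓞 K)
    (F : MvPolynomial (Fin 2) K)
    (hF : F = C (algebraMap (𝓞 K) K α₀) * X 0 ^ 3 + C (algebraMap (𝓞 K) K α₁) * X 0 ^ 2 * X 1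
      + C (algebraMap (𝓞 K) K α₂) * X 0 * X 1 ^ 2 + C (algebraMap (𝓞 K) K α₃) * X 1 ^ 3)
    (Δ : K)
    (hΔ : Δ = algebraMap (𝓞 K) K (18 * α₀ * α₁ * α₂ * α₃ + (α₁ * α₂) ^ 2 - 27 * (α₀ * α₃) ^ 2
        - 4 * α₀ * α₂ ^ 3 - 4 * α₁ ^ 3 * α₃))
    (hΔ0 : Δ ≠ 0)
    (H G T : MvPolynomial (Fin 2) K)
    (hH : H = C (1 / 4 : K) *
      (pderiv 0 (pderiv 0 F) * pderiv 1 (pderiv 1 F) - pderiv 1 (pderiv 0 F) ^ 2))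
    (hG : G = pderiv 0 F * pderiv 1 H - pderiv 1 F * pderiv 0 H)
    (hT : T = C (algebraMap (𝓞 K) K α₁) * X 0 - C (algebraMap (𝓞 K) K α₂) * X 1)
    (x₀ y₀ : 𝓞 K)
    (P : Fin 2 → K)
    (hP : P = ![algebraMap (𝓞 K) K x₀, algebraMap (𝓞 K) K y₀])
    (hF0 : MvPolynomial.eval P F ≠ 0)
    (W : WeierstrassCurve K)
    (hW : W = ⟨0, MvPolynomial.eval P T, 0,
      (MvPolynomial.eval P T ^ 2 + MvPolynomial.eval P H) / 3,
      (MvPolynomial.eval P T ^ 3 + 3 * MvPolynomial.eval P T * MvPolynomial.eval P H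
        + MvPolynomial.eval P G) / 27⟩) :
    W.c₄ ^ 3 / W.Δ =
      -2 ^ 8 * MvPolynomial.eval P H ^ 3 / (Δ * MvPolynomial.eval P F ^ 2) := by
  set A := algebraMap (𝓞 K) K
  set a := A α₀; set b := A α₁; set c := A α₂; set d := A α₃
  set x := A x₀; set y := A y₀
  subst hP
  have hΔ' : Δ = 18*a*b*c*d + (b*c)^2 - 27*(a*d)^2 - 4*a*c^3 - 4*b^3*d := by
    rw [hΔ]; push_cast [map_add, map_mul, map_sub, map_pow, map_ofNat]; ring
  have hne10 : (1 : Fin 2) ≠ 0 := by decide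
  have hne01 : (0 : Fin 2) ≠ 1 := by decide
  have d0F : pderiv 0 F = C a * (3 * X 0 ^ 2) + C b * (2 * X 0 * X 1) + C c * X 1 ^ 2 := by
    rw [hF]
    simp only [map_add, pderiv_mul, pderiv_pow, pderiv_C, pderiv_X_self,
      pderiv_X_of_ne hne10, smul_eq_mul, nsmul_eq_mul]
    push_cast
    ring
  have d1F : pderiv 1 F = C b * X 0 ^ 2 + C c * (2 * X 0 * X 1) + C d * (3 * X 1 ^ 2) := by
    rw [hF]
    simp only [map_add, pderiv_mul, pderiv_pow, pderiv_C, pderiv_X_self,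
      pderiv_X_of_ne hne01, smul_eq_mul, nsmul_eq_mul]
    push_cast
    ring
  have d00F : pderiv 0 (pderiv 0 F) = C a * (6 * X 0) + C b * (2 * X 1) := by
    rw [d0F]
    simp only [map_add, pderiv_mul, pderiv_pow, pderiv_C, pderiv_X_self,
      pderiv_X_of_ne hne10, smul_eq_mul, nsmul_eq_mul, pderiv_one,
      map_ofNat, map_mul, pderiv_ofNat_aux]
    push_cast
    ring
  have d01F : pderiv 1 (pderiv 0 F) = C b * (2 * X 0) + C c * (2 * X 1) := by
    rw [d0F]
    simp only [map_add, pderiv_mul, pderiv_pow, pderiv_C, pderiv_X_self,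
      pderiv_X_of_ne hne01, smul_eq_mul, nsmul_eq_mul, pderiv_one,
      map_ofNat, map_mul, pderiv_ofNat_aux]
    push_cast
    ring
  have d11F : pderiv 1 (pderiv 1 F) = C c * (2 * X 0) + C d * (6 * X 1) := by
    rw [d1F]
    simp only [map_add, pderiv_mul, pderiv_pow, pderiv_C, pderiv_X_self,
      pderiv_X_of_ne hne01, smul_eq_mul, nsmul_eq_mul, pderiv_one,
      map_ofNat, map_mul, pderiv_ofNat_aux]
    push_cast
    ring
  have hH' : H = C (1/4 : K) * ((C a * C c * 12 - C b * C b * 4) * X 0 ^ 2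
      + (C a * C d * 36 - C b * C c * 4) * (X 0 * X 1)
      + (C b * C d * 12 - C c * C c * 4) * X 1 ^ 2) := by
    rw [hH, d00F, d11F, d01F]; ring
  have d0H : pderiv 0 H = C (1/4 : K) * ((C a * C c * 12 - C b * C b * 4) * (2 * X 0)
      + (C a * C d * 36 - C b * C c * 4) * X 1) := by
    rw [hH']
    simp only [pderiv_C_mul, map_add, map_sub, pderiv_mul, pderiv_pow, pderiv_C,
      pderiv_X_self, pderiv_X_of_ne hne10, smul_eq_mul, nsmul_eq_mul, pderiv_one,
      map_ofNat, map_mul, pderiv_ofNat_aux]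
    push_cast
    ring
  have d1H : pderiv 1 H = C (1/4 : K) * ((C a * C d * 36 - C b * C c * 4) * X 0
      + (C b * C d * 12 - C c * C c * 4) * (2 * X 1)) := by
    rw [hH']
    simp only [pderiv_C_mul, map_add, map_sub, pderiv_mul, pderiv_pow, pderiv_C,
      pderiv_X_self, pderiv_X_of_ne hne01, smul_eq_mul, nsmul_eq_mul, pderiv_one,
      map_ofNat, map_mul, pderiv_ofNat_aux]
    push_cast
    ring
  have evs : MvPolynomial.eval ![x, y] (X 0 : MvPolynomial (Fin 2) K) = x ∧
      MvPolynomial.eval ![x, y] (X 1 : MvPolynomial (Fin 2) K) = y := by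
    constructor <;> simp
  have hFe : MvPolynomial.eval ![x, y] F = a*x^3 + b*x^2*y + c*x*y^2 + d*y^3 := by
    rw [hF]
    simp [Matrix.cons_val_zero, Matrix.cons_val_one, Matrix.head_cons]
  have hHe : MvPolynomial.eval ![x, y] H = (3*a*c - b^2)*x^2 + (9*a*d - b*c)*x*y
      + (3*b*d - c^2)*y^2 := by
    rw [hH']
    simp only [map_add, map_sub, map_mul, map_pow, map_ofNat, eval_C, eval_X,
      Matrix.cons_val_zero, Matrix.cons_val_one, Matrix.head_cons]
    ring
  have hGe : MvPolynomial.eval ![x, y] G =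
      (3*a*x^2 + 2*b*x*y + c*y^2) * ((9*a*d - b*c)*x + 2*(3*b*d - c^2)*y)
      - (b*x^2 + 2*c*x*y + 3*d*y^2) * (2*(3*a*c - b^2)*x + (9*a*d - b*c)*y) := by
    rw [hG, d0F, d1F, d0H, d1H]
    simp only [map_add, map_sub, map_mul, map_pow, map_ofNat, eval_C, eval_X,
      Matrix.cons_val_zero, Matrix.cons_val_one, Matrix.head_cons]
    ring
  have hTe : MvPolynomial.eval ![x, y] T = b*x - c*y := by
    rw [hT]
    simp [Matrix.cons_val_zero, Matrix.cons_val_one, Matrix.head_cons]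
  set t := MvPolynomial.eval ![x, y] T
  set h := MvPolynomial.eval ![x, y] H
  set g := MvPolynomial.eval ![x, y] G
  set f := MvPolynomial.eval ![x, y] F
  have h27 : (27 : K) ≠ 0 := by norm_num
  have hc4 : W.c₄ = -16 * h := by
    subst hW
    simp only [WeierstrassCurve.c₄, WeierstrassCurve.b₂, WeierstrassCurve.b₄]
    field_simp
    ring
  have hsyz : 4 * h^3 + g^2 = -27 * Δ * f^2 := by
    rw [hHe, hGe, hFe, hΔ']; ring
  have hDW : W.Δ = 16 * Δ * f^2 := by
    subst hW
    simp only [WeierstrassCurve.Δ, WeierstrassCurve.b₂, WeierstrassCurve.b₄,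
      WeierstrassCurve.b₆, WeierstrassCurve.b₈]
    have key : (16:K) * Δ * f^2 = -(64 * h^3 + 16 * g^2)/27 := by
      rw [eq_div_iff h27]; linear_combination (16:K) * hsyz
    rw [key]
    field_simp
    ring
  have hfne : f ≠ 0 := hF0
  rw [hc4, hDW]
  field_simp
  ring
end

section
/- Let $K$ be a number field, $F \in \mathcal{O}_K[x,y]$ a binary cubic with nonzero discriminant $\Delta_F$, and $\mathfrak{P}$ a prime ideal of $\mathcal{O}_K$ not dividing $2\Delta_F$. If $x_1, y_1 \in \mathcal{O}_K$ satisfy $\mathfrak{P} \nmid \gcd(x_1, y_1)$ and $F(x_1,y_1) \neq 0$, then the Frey curve $E_{x_1,y_1}$ is semistable at $\mathfrak{P}$, i.e., has good or multiplicative reduction at $\mathfrak{P}$. -/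
open MvPolynomial NumberField

set_option maxHeartbeats 4000000 in
/-- **Semistability of the Frey curve away from `S_F`.** Let `K` be a number field,
`F(x,y) = α₀x³ + α₁x²y + α₂xy² + α₃y³ ∈ 𝓞 K[x,y]` a binary cubic with nonzero discriminant
`Δ_F`, and `𝔓` a prime ideal of `𝓞 K` not dividing `2Δ_F`. If `x₁, y₁ ∈ 𝓞 K` satisfy
`𝔓 ∤ gcd(x₁,y₁)` and `F(x₁,y₁) ≠ 0`, then the (integral) Frey curve `E_{x₁,y₁}` is
semistable at `𝔓`: its invariants satisfy `v_𝔓(c₄) = 0` or `v_𝔓(Δ) = 0`, i.e. it has good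
or multiplicative reduction at `𝔓`. -/
theorem frey_curve_semistable (K : Type*) [Field K] [NumberField K]
    (α₀ α₁ α₂ α₃ : 𝓞 K)
    (F : MvPolynomial (Fin 2) (𝓞 K))
    (hF : F = C α₀ * X 0 ^ 3 + C α₁ * X 0 ^ 2 * X 1 + C α₂ * X 0 * X 1 ^ 2 + C α₃ * X 1 ^ 3)
    (Δ : 𝓞 K)
    (hΔ : Δ = 18 * α₀ * α₁ * α₂ * α₃ + (α₁ * α₂) ^ 2 - 27 * (α₀ * α₃) ^ 2
      - 4 * α₀ * α₂ ^ 3 - 4 * α₁ ^ 3 * α₃)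
    (hΔ0 : Δ ≠ 0)
    (H G T : MvPolynomial (Fin 2) (𝓞 K))
    (hH : C 4 * H = pderiv 0 (pderiv 0 F) * pderiv 1 (pderiv 1 F) - pderiv 1 (pderiv 0 F) ^ 2)
    (hG : G = pderiv 0 F * pderiv 1 H - pderiv 1 F * pderiv 0 H)
    (hT : T = C α₁ * X 0 - C α₂ * X 1)
    (𝔓 : Ideal (𝓞 K)) (h𝔓 : 𝔓.IsPrime) (h𝔓0 : 𝔓 ≠ ⊥)
    (h𝔓2Δ : 2 * Δ ∉ 𝔓)
    (x₁ y₁ : 𝓞 K)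
    (hgcd : ¬(x₁ ∈ 𝔓 ∧ y₁ ∈ 𝔓))
    (hF0 : MvPolynomial.eval ![x₁, y₁] F ≠ 0)
    (a₄ a₆ : 𝓞 K)
    (ha₄ : 3 * a₄ = MvPolynomial.eval ![x₁, y₁] (T ^ 2 + H))
    (ha₆ : 27 * a₆ = MvPolynomial.eval ![x₁, y₁] (T ^ 3 + 3 * T * H + G))
    (W : WeierstrassCurve (𝓞 K))
    (hW : W = ⟨0, MvPolynomial.eval ![x₁, y₁] T, 0, a₄, a₆⟩) :
    W.c₄ ∉ 𝔓 ∨ W.Δ ∉ 𝔓 := by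
  have h4 : (4 : 𝓞 K) ≠ 0 := by norm_num
  have h3 : (3 : 𝓞 K) ≠ 0 := by norm_num
  have h27 : (27 : 𝓞 K) ≠ 0 := by norm_num
  have hf : MvPolynomial.eval ![x₁, y₁] F
      = α₀ * x₁^3 + α₁ * x₁^2 * y₁ + α₂ * x₁ * y₁^2 + α₃ * y₁^3 := by
    rw [hF]; simp
  have ht : MvPolynomial.eval ![x₁, y₁] T = α₁ * x₁ - α₂ * y₁ := by
    rw [hT]; simp
  have hHval : MvPolynomial.eval ![x₁, y₁] H
      = 3*α₀*α₂*x₁^2 - α₁^2*x₁^2 + (9*α₀*α₃ - α₁*α₂)*x₁*y₁ + (3*α₁*α₃ - α₂^2)*y₁^2 := by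
    apply mul_left_cancel₀ h4
    have h1 := congrArg (MvPolynomial.eval ![x₁, y₁]) hH
    rw [hF] at h1
    simp [pderiv_mul, pderiv_X_self, pderiv_X_of_ne, pow_succ] at h1
    linear_combination h1
  have hGval : MvPolynomial.eval ![x₁, y₁] G
      = 2*α₁^3*x₁^3 - 9*α₀*α₁*α₂*x₁^3 + 27*α₀^2*α₃*x₁^3
        + 3*α₁^2*α₂*x₁^2*y₁ - 18*α₀*α₂^2*x₁^2*y₁ + 27*α₀*α₁*α₃*x₁^2*y₁
        - 3*α₁*α₂^2*x₁*y₁^2 + 18*α₁^2*α₃*x₁*y₁^2 - 27*α₀*α₂*α₃*x₁*y₁^2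
        - 2*α₂^3*y₁^3 + 9*α₁*α₂*α₃*y₁^3 - 27*α₀*α₃^2*y₁^3 := by
    apply mul_left_cancel₀ h4
    have hFx : MvPolynomial.eval ![x₁, y₁] (pderiv 0 F)
        = 3*α₀*x₁^2 + 2*α₁*x₁*y₁ + α₂*y₁^2 := by
      rw [hF]
      simp [pderiv_mul, pderiv_X_self, pderiv_X_of_ne, pow_succ]
      ring
    have hFy : MvPolynomial.eval ![x₁, y₁] (pderiv 1 F)
        = α₁*x₁^2 + 2*α₂*x₁*y₁ + 3*α₃*y₁^2 := by
      rw [hF]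
      simp [pderiv_mul, pderiv_X_self, pderiv_X_of_ne, pow_succ]
      ring
    have hHx : (4 : 𝓞 K) * MvPolynomial.eval ![x₁, y₁] (pderiv 0 H)
        = 4*((6*α₀*α₂ - 2*α₁^2)*x₁ + (9*α₀*α₃ - α₁*α₂)*y₁) := by
      have h1 := congrArg (MvPolynomial.eval ![x₁, y₁]) (congrArg (pderiv 0) hH)
      rw [pderiv_C_mul, hF] at h1
      simp [pderiv_mul, pderiv_X_self, pderiv_X_of_ne, pow_succ] at h1
      linear_combination h1
    have hHy : (4 : 𝓞 K) * MvPolynomial.eval ![x₁, y₁] (pderiv 1 H)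
        = 4*((9*α₀*α₃ - α₁*α₂)*x₁ + (6*α₁*α₃ - 2*α₂^2)*y₁) := by
      have h1 := congrArg (MvPolynomial.eval ![x₁, y₁]) (congrArg (pderiv 1) hH)
      rw [pderiv_C_mul, hF] at h1
      simp [pderiv_mul, pderiv_X_self, pderiv_X_of_ne, pow_succ] at h1
      linear_combination h1
    have h5 : MvPolynomial.eval ![x₁, y₁] G
        = MvPolynomial.eval ![x₁, y₁] (pderiv 0 F) * MvPolynomial.eval ![x₁, y₁] (pderiv 1 H)
          - MvPolynomial.eval ![x₁, y₁] (pderiv 1 F) * MvPolynomial.eval ![x₁, y₁] (pderiv 0 H) := by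
      rw [hG]; simp
    linear_combination 4 * h5 + (4 * MvPolynomial.eval ![x₁, y₁] (pderiv 1 H)) * hFx
      + (3*α₀*x₁^2 + 2*α₁*x₁*y₁ + α₂*y₁^2) * hHy
      - (4 * MvPolynomial.eval ![x₁, y₁] (pderiv 0 H)) * hFy
      - (α₁*x₁^2 + 2*α₂*x₁*y₁ + 3*α₃*y₁^2) * hHx
  have ha₄' : a₄ = α₀*α₂*x₁^2 + (3*α₀*α₃ - α₁*α₂)*x₁*y₁ + α₁*α₃*y₁^2 := by
    apply mul_left_cancel₀ h3
    rw [ha₄]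
    simp only [map_add, map_pow]
    rw [ht, hHval]; ring
  have ha₆' : a₆ = α₀^2*α₃*x₁^3 + (2*α₀*α₁*α₃ - α₀*α₂^2)*x₁^2*y₁
      + (α₁^2*α₃ - 2*α₀*α₂*α₃)*x₁*y₁^2 - α₀*α₃^2*y₁^3 := by
    apply mul_left_cancel₀ h27
    rw [ha₆]
    simp only [map_add, map_mul, map_pow, map_ofNat]
    rw [ht, hHval, hGval]; ring
  have hc4 : W.c₄ = (-16) * MvPolynomial.eval ![x₁, y₁] H := by
    rw [hW]
    simp only [WeierstrassCurve.c₄, WeierstrassCurve.b₂, WeierstrassCurve.b₄]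
    rw [ht, ha₄', hHval]; ring
  have hDW : W.Δ = 16 * Δ * (MvPolynomial.eval ![x₁, y₁] F)^2 := by
    rw [hW]
    simp only [WeierstrassCurve.Δ, WeierstrassCurve.b₂, WeierstrassCurve.b₄,
      WeierstrassCurve.b₆, WeierstrassCurve.b₈]
    rw [ht, ha₄', ha₆', hf, hΔ]; ring
  by_contra hcon
  push_neg at hcon
  obtain ⟨hc, hD⟩ := hcon
  have h2P : (2 : 𝓞 K) ∉ 𝔓 := fun hh => h𝔓2Δ (Ideal.mul_mem_right _ _ hh)
  have hΔP : Δ ∉ 𝔓 := fun hh => h𝔓2Δ (Ideal.mul_mem_left _ _ hh)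
  have h16 : (16 : 𝓞 K) ∉ 𝔓 := by
    intro hh
    exact h2P (h𝔓.mem_of_pow_mem 4 ((by norm_num : ((2:𝓞 K))^4 = 16) ▸ hh))
  have hHP : MvPolynomial.eval ![x₁, y₁] H ∈ 𝔓 := by
    have h' : (-16) * MvPolynomial.eval ![x₁, y₁] H ∈ 𝔓 := hc4 ▸ hc
    rcases h𝔓.mem_or_mem h' with h'' | h''
    · exact absurd (𝔓.neg_mem_iff.mp h'') h16
    · exact h''
  have hFP : MvPolynomial.eval ![x₁, y₁] F ∈ 𝔓 := by
    have h' : 16 * Δ * (MvPolynomial.eval ![x₁, y₁] F)^2 ∈ 𝔓 := hDW ▸ hD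
    rcases h𝔓.mem_or_mem h' with h'' | h''
    · rcases h𝔓.mem_or_mem h'' with h3' | h3'
      · exact absurd h3' h16
      · exact absurd h3' hΔP
    · exact h𝔓.mem_of_pow_mem 2 h''
  have hΔsqP : ∀ z : 𝓞 K, Δ^2 * z^6 ∈ 𝔓 → z ∈ 𝔓 := by
    intro z hz
    rcases h𝔓.mem_or_mem hz with h'' | h''
    · exact absurd (h𝔓.mem_of_pow_mem 2 h'') hΔP
    · exact h𝔓.mem_of_pow_mem 6 h''
  have hy : y₁ ∈ 𝔓 := by
    apply hΔsqP
    have key : Δ^2 * y₁^6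
        = -(((1) * α₁^5 * α₂^2 * y₁^3 + (-4) * α₁^6 * α₃ * y₁^3 + (-10) * α₀ * α₁^3 * α₂^3 * y₁^3 + (42) * α₀ * α₁^4 * α₂ * α₃ * y₁^3 + (-3) * α₀ * α₁^4 * α₂^2 * x₁ * y₁^2 + (12) * α₀ * α₁^5 * α₃ * x₁ * y₁^2 + (24) * α₀^2 * α₁ * α₂^4 * y₁^3 + (-81) * α₀^2 * α₁^2 * α₂^2 * α₃ * y₁^3 + (21) * α₀^2 * α₁^2 * α₂^3 * x₁ * y₁^2 + (-135) * α₀^2 * α₁^3 * α₃^2 * y₁^3 + (-90) * α₀^2 * α₁^3 * α₂ * α₃ * x₁ * y₁^2 + (-108) * α₀^3 * α₂^3 * α₃ * y₁^3 + (-36) * α₀^3 * α₂^4 * x₁ * y₁^2 + (648) * α₀^3 * α₁ * α₂ * α₃^2 * y₁^3 + (162) * α₀^3 * α₁ * α₂^2 * α₃ * x₁ * y₁^2 + (81) * α₀^3 * α₁^2 * α₃^2 * x₁ * y₁^2 + (-729) * α₀^4 * α₃^3 * y₁^3 + (-243) * α₀^4 * α₂ * α₃^2 * x₁ * y₁^2)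 * MvPolynomial.eval ![x₁, y₁] F + ((1) * α₁^4 * α₂^2 * y₁^4 + (-4) * α₁^5 * α₃ * y₁^4 + (-8) * α₀ * α₁^2 * α₂^3 * y₁^4 + (34) * α₀ * α₁^3 * α₂ * α₃ * y₁^4 + (-2) * α₀ * α₁^3 * α₂^2 * x₁ * y₁^3 + (8) * α₀ * α₁^4 * α₃ * x₁ * y₁^3 + (16) * α₀^2 * α₂^4 * y₁^4 + (-72) * α₀^2 * α₁ * α₂^2 * α₃ * y₁^4 + (8) * α₀^2 * α₁ * α₂^3 * x₁ * y₁^3 + (-27) * α₀^2 * α₁^2 * α₃^2 * y₁^4 + (-36) * α₀^2 * α₁^2 * α₂ * α₃ * x₁ * y₁^3 + (-3) * α₀^2 * α₁^2 * α₂^2 * x₁^2 * y₁^2 + (12) * α₀^2 * α₁^3 * α₃ * x₁^2 * y₁^2 + (108) * α₀^3 * α₂ * α₃^2 * y₁^4 + (12) * α₀^3 * α₂^3 * x₁^2 * y₁^2 + (54) * α₀^3 * α₁ * α₃^2 * x₁ * y₁^3 + (-54) * α₀^3 * α₁ * α₂ * α₃ * x₁^2 * y₁^2 + (81) * α₀^4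 * α₃^2 * x₁^2 * y₁^2) * MvPolynomial.eval ![x₁, y₁] H) := by
      rw [hf, hHval, hΔ]; ring
    rw [key]
    exact 𝔓.neg_mem_iff.mpr (Ideal.add_mem _ (Ideal.mul_mem_left _ _ hFP)
      (Ideal.mul_mem_left _ _ hHP))
  have hx : x₁ ∈ 𝔓 := by
    apply hΔsqP
    have key : Δ^2 * x₁^6
        = -(((-3) * α₁^2 * α₂^4 * α₃ * x₁^2 * y₁ + (1) * α₁^2 * α₂^5 * x₁^3 + (21) * α₁^3 * α₂^2 * α₃^2 * x₁^2 * y₁ + (-10) * α₁^3 * α₂^3 * α₃ * x₁^3 + (-36) * α₁^4 * α₃^3 * x₁^2 * y₁ + (24) * α₁^4 * α₂ * α₃^2 * x₁^3 + (12) * α₀ * α₂^5 * α₃ * x₁^2 * y₁ + (-4) * α₀ * α₂^6 * x₁^3 + (-90) * α₀ * α₁ * α₂^3 * α₃^2 * x₁^2 * y₁ + (42) * α₀ * α₁ * α₂^4 * α₃ * x₁^3 + (162) * α₀ * α₁^2 * α₂ * α₃^3 * x₁^2 * y₁ + (-81) * α₀ * α₁^2 * α₂^2 * α₃^2 * x₁^3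 + (-108) * α₀ * α₁^3 * α₃^3 * x₁^3 + (81) * α₀^2 * α₂^2 * α₃^3 * x₁^2 * y₁ + (-135) * α₀^2 * α₂^3 * α₃^2 * x₁^3 + (-243) * α₀^2 * α₁ * α₃^4 * x₁^2 * y₁ + (648) * α₀^2 * α₁ * α₂ * α₃^3 * x₁^3 + (-729) * α₀^3 * α₃^4 * x₁^3) * MvPolynomial.eval ![x₁, y₁] F + ((-3) * α₁^2 * α₂^2 * α₃^2 * x₁^2 * y₁^2 + (-2) * α₁^2 * α₂^3 * α₃ * x₁^3 * y₁ + (1) * α₁^2 * α₂^4 * x₁^4 + (12) * α₁^3 * α₃^3 * x₁^2 * y₁^2 + (8) * α₁^3 * α₂ * α₃^2 * x₁^3 * y₁ + (-8) * α₁^3 * α₂^2 * α₃ * x₁^4 + (16) * α₁^4 * α₃^2 * x₁^4 + (12) * α₀ * α₂^3 * α₃^2 * x₁^2 * y₁^2 + (8) * α₀ * α₂^4 * α₃ * x₁^3 * y₁ + (-4) * α₀ * α₂^5 * x₁^4 + (-54) * α₀ * α₁ * α₂ * α₃^3 * x₁^2 * y₁^2 + (-36) * α₀ * α₁ * α₂^2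 * α₃^2 * x₁^3 * y₁ + (34) * α₀ * α₁ * α₂^3 * α₃ * x₁^4 + (-72) * α₀ * α₁^2 * α₂ * α₃^2 * x₁^4 + (81) * α₀^2 * α₃^4 * x₁^2 * y₁^2 + (54) * α₀^2 * α₂ * α₃^3 * x₁^3 * y₁ + (-27) * α₀^2 * α₂^2 * α₃^2 * x₁^4 + (108) * α₀^2 * α₁ * α₃^3 * x₁^4) * MvPolynomial.eval ![x₁, y₁] H) := by
      rw [hf, hHval, hΔ]; ring
    rw [key]
    exact 𝔓.neg_mem_iff.mpr (Ideal.add_mem _ (Ideal.mul_mem_left _ _ hFP)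
      (Ideal.mul_mem_left _ _ hHP))
  exact hgcd ⟨hx, hy⟩
end

section
/- Let $K$ be a number field, $F \in \mathcal{O}_K[x,y]$ a binary cubic with nonzero discriminant, and $S_F$ the set consisting of chosen class-group representative primes $\mathcal{H}_K$, the primes dividing $2\Delta_F$, and the real places. Suppose for some $x_1, y_1 \in K$ (not both zero) the Frey curve $E_{x_1,y_1}$ has conductor supported on $S_F$. Then there exists $\xi \in K^{\times}$ such that $\xi x_1, \xi y_1 \in \mathcal{O}_K$, the ideal $\gcd(\xi x_1 \mathcal{O}_K, \xi y_1 \mathcal{O}_K)$ is either trivial (if $K$ has class number one) or a prime in $\mathcal{H}_K$, and the conductor of $E_{\xi x_1, \xi y_1}$ is still supported on $S_F$. -/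
open MvPolynomial NumberField IsDedekindDomain nonZeroDivisors

/-!
Clear denominators to get an integral pair `(X, Y)` with `(X, Y) = d • (x₁, y₁)`. If `P` lies in the
ideal class of `I = (X, Y)` (take `P = 𝓞 K` when `h_K = 1`), then `z I = P` for some `z ∈ K^×`, so
`(zX, zY)` is an integral pair generating `P`. The `j`-invariant is a quotient of two binary forms
of degree 6, so it is unchanged by the scaling `ξ = z d`, and with it the conductor condition.
-/

namespace MvPolynomial.IsHomogeneous

variable {σ R : Type*}

theorem eval_smul [CommSemiring R] {φ : MvPolynomial σ R} {n : ℕ} (hφ : φ.IsHomogeneous n)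
    (r : R) (x : σ → R) : eval (r • x) φ = r ^ n * eval x φ := by
  simp only [eval_eq, Finset.mul_sum]
  refine Finset.sum_congr rfl fun d hd => ?_
  simp only [Pi.smul_apply, smul_eq_mul, mul_pow, Finset.prod_mul_distrib,
    Finset.prod_pow_eq_pow_sum, ← hφ.degree_eq_sum_deg_support hd]
  ring

theorem eval_smul_div_eval_smul [Field R] {φ ψ : MvPolynomial σ R} {n : ℕ}
    (hφ : φ.IsHomogeneous n) (hψ : ψ.IsHomogeneous n) {r : R} (hr : r ≠ 0) (x : σ → R) :
    eval (r • x) φ / eval (r • x) ψ = eval x φ / eval x ψ := by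
  rw [hφ.eval_smul, hψ.eval_smul, mul_div_mul_left _ _ (pow_ne_zero n hr)]

theorem hessian_det [CommRing R] {φ : MvPolynomial (Fin 2) R} {n : ℕ} (hφ : φ.IsHomogeneous n) :
    (pderiv 0 (pderiv 0 φ) * pderiv 1 (pderiv 1 φ) - pderiv 1 (pderiv 0 φ) ^ 2).IsHomogeneous
      (2 * (n - 2)) := by
  have h : ∀ i j : Fin 2, (pderiv i (pderiv j φ)).IsHomogeneous (n - 2) := fun i j =>
    hφ.pderiv.pderiv
  rw [two_mul]
  exact ((h 0 0).mul (h 1 1)).sub (by simpa only [mul_two] using (h 1 0).pow 2)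

end MvPolynomial.IsHomogeneous

theorem MvPolynomial.isHomogeneous_binaryCubic {R : Type*} [CommSemiring R] (a₀ a₁ a₂ a₃ : R) :
    (C a₀ * X 0 ^ 3 + C a₁ * X 0 ^ 2 * X 1 + C a₂ * X 0 * X 1 ^ 2 + C a₃ * X 1 ^ 3 :
      MvPolynomial (Fin 2) R).IsHomogeneous 3 :=
  (((isHomogeneous_C_mul_X_pow a₀ 0 3).add ((isHomogeneous_C_mul_X_pow a₁ 0 2).mul
    (isHomogeneous_X R 1))).add ((isHomogeneous_C_mul_X a₂ 0).mul (isHomogeneous_X_pow 1 2))).add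
    (isHomogeneous_C_mul_X_pow a₃ 1 3)

section ScalingPairs

variable {R K : Type*} [CommRing R] [IsDedekindDomain R] [Field K] [Algebra R K]
  [IsFractionRing R K]

theorem ClassGroup.exists_mul_span_pair_eq_of_mk0_eq {X Y : R}
    (hI : Ideal.span {X} ⊔ Ideal.span {Y} ∈ (Ideal R)⁰) {J : (Ideal R)⁰}
    (h : ClassGroup.mk0 ⟨_, hI⟩ = ClassGroup.mk0 J) :
    ∃ z : K, z ≠ 0 ∧ ∃ x₂ y₂ : R, algebraMap R K x₂ = z * algebraMap R K X ∧
      algebraMap R K y₂ = z * algebraMap R K Y ∧ Ideal.span {x₂} ⊔ Ideal.span {y₂} = J := by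
  obtain ⟨z, hz, hzI⟩ := (ClassGroup.mk0_eq_mk0_iff_exists_fraction_ring K).mp h
  have hmem : ∀ a ∈ Ideal.span {X} ⊔ Ideal.span {Y}, ∃ b ∈ (J : Ideal R),
      algebraMap R K b = z * algebraMap R K a := fun a ha =>
    (FractionalIdeal.mem_coeIdeal _).mp (hzI ▸ FractionalIdeal.mul_mem_mul
      (FractionalIdeal.mem_spanSingleton_self _ z) (FractionalIdeal.mem_coeIdeal_of_mem _ ha))
  obtain ⟨x₂, -, hx₂⟩ := hmem X (Ideal.mem_sup_left (Ideal.mem_span_singleton_self X))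
  obtain ⟨y₂, -, hy₂⟩ := hmem Y (Ideal.mem_sup_right (Ideal.mem_span_singleton_self Y))
  refine ⟨z, hz, x₂, y₂, hx₂, hy₂, FractionalIdeal.coeIdeal_injective (K := K) ?_⟩
  simp only [FractionalIdeal.coeIdeal_sup, FractionalIdeal.coeIdeal_span_singleton, hx₂, hy₂,
    ← FractionalIdeal.spanSingleton_mul_spanSingleton, ← mul_add]
  simpa only [FractionalIdeal.coeIdeal_sup, FractionalIdeal.coeIdeal_span_singleton] using hzI

theorem ClassGroup.exists_mul_span_pair_mem {𝒞 : Set (Ideal R)}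
    (h𝒞 : ∀ c : ClassGroup R, ∃ P ∈ 𝒞, ∃ hP : P ∈ (Ideal R)⁰, ClassGroup.mk0 ⟨P, hP⟩ = c)
    {x y : K} (hxy : ¬(x = 0 ∧ y = 0)) :
    ∃ ξ : K, ξ ≠ 0 ∧ ∃ x₂ y₂ : R, algebraMap R K x₂ = ξ * x ∧ algebraMap R K y₂ = ξ * y ∧
      Ideal.span {x₂} ⊔ Ideal.span {y₂} ∈ 𝒞 := by
  obtain ⟨d, hd⟩ := IsLocalization.exist_integer_multiples_of_finite R⁰ ![x, y]
  obtain ⟨X, hX⟩ := hd 0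
  obtain ⟨Y, hY⟩ := hd 1
  simp only [Matrix.cons_val_zero, Matrix.cons_val_one, Algebra.smul_def] at hX hY
  have hd0 : algebraMap R K d ≠ 0 := IsFractionRing.to_map_ne_zero_of_mem_nonZeroDivisors d.2
  have hI : Ideal.span {X} ⊔ Ideal.span {Y} ∈ (Ideal R)⁰ := by
    refine mem_nonZeroDivisors_of_ne_zero ?_
    rw [Ne, Submodule.zero_eq_bot, sup_eq_bot_iff, Ideal.span_singleton_eq_bot,
      Ideal.span_singleton_eq_bot]
    rintro ⟨rfl, rfl⟩
    simp only [map_zero, zero_eq_mul, hd0, false_or] at hX hY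
    exact hxy ⟨hX, hY⟩
  obtain ⟨P, hP𝒞, hP, hPc⟩ := h𝒞 (ClassGroup.mk0 ⟨_, hI⟩)
  obtain ⟨z, hz, x₂, y₂, hx₂, hy₂, hspan⟩ :=
    ClassGroup.exists_mul_span_pair_eq_of_mk0_eq (K := K) hI hPc.symm
  refine ⟨z * algebraMap R K d, mul_ne_zero hz hd0, x₂, y₂, ?_, ?_, hspan ▸ hP𝒞⟩
  · rw [hx₂, hX, mul_assoc]
  · rw [hy₂, hY, mul_assoc]

end ScalingPairs

theorem scale_frey_pair_general (K : Type*) [Field K] [NumberField K]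
    (α₀ α₁ α₂ α₃ : 𝓞 K)
    (F : MvPolynomial (Fin 2) K)
    (hF : F = C (algebraMap (𝓞 K) K α₀) * X 0 ^ 3 + C (algebraMap (𝓞 K) K α₁) * X 0 ^ 2 * X 1
      + C (algebraMap (𝓞 K) K α₂) * X 0 * X 1 ^ 2 + C (algebraMap (𝓞 K) K α₃) * X 1 ^ 3)
    (Δ : 𝓞 K)
    (H : MvPolynomial (Fin 2) K)
    (hH : H = C (1 / 4 : K) *
      (pderiv 0 (pderiv 0 F) * pderiv 1 (pderiv 1 F) - pderiv 1 (pderiv 0 F) ^ 2))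
    (j : K → K → K)
    (hj : ∀ x y : K, j x y = -2 ^ 8 * MvPolynomial.eval ![x, y] H ^ 3 /
      (algebraMap (𝓞 K) K Δ * MvPolynomial.eval ![x, y] F ^ 2))
    -- the chosen class-group representative primes `𝓗_K`, not dividing `2`
    (HK : Finset (Ideal (𝓞 K)))
    (hHKrep : Nat.card (ClassGroup (𝓞 K)) ≠ 1 → ∀ c : ClassGroup (𝓞 K),
      ∃ P ∈ HK, ∃ hP : P ∈ (Ideal (𝓞 K))⁰, ClassGroup.mk0 ⟨P, hP⟩ = c)
    -- the set `S_F`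
    (S : Set (HeightOneSpectrum (𝓞 K)))
    (x₁ y₁ : K) (hxy : ¬(x₁ = 0 ∧ y₁ = 0))
    -- the conductor of `E_{x₁,y₁}` is supported on `S_F`
    (hcond : ∀ v : HeightOneSpectrum (𝓞 K), v ∉ S → v.valuation K (j x₁ y₁) ≤ 1) :
    ∃ ξ : K, ξ ≠ 0 ∧ ∃ x₂ y₂ : 𝓞 K,
      algebraMap (𝓞 K) K x₂ = ξ * x₁ ∧ algebraMap (𝓞 K) K y₂ = ξ * y₁ ∧
      ((Nat.card (ClassGroup (𝓞 K)) = 1 → Ideal.span {x₂} ⊔ Ideal.span {y₂} = ⊤) ∧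
        (Nat.card (ClassGroup (𝓞 K)) ≠ 1 → Ideal.span {x₂} ⊔ Ideal.span {y₂} ∈ HK)) ∧
      (∀ v : HeightOneSpectrum (𝓞 K), v ∉ S →
        v.valuation K (j (algebraMap (𝓞 K) K x₂) (algebraMap (𝓞 K) K y₂)) ≤ 1) := by
  have hF3 : F.IsHomogeneous 3 := hF ▸ isHomogeneous_binaryCubic _ _ _ _
  have hH2 : H.IsHomogeneous 2 := hH ▸ hF3.hessian_det.C_mul _
  have hj_smul : ∀ ξ : K, ξ ≠ 0 → ∀ x y : K, j (ξ * x) (ξ * y) = j x y := by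
    intro ξ hξ x y
    have hv : ![ξ * x, ξ * y] = ξ • ![x, y] := by simp [Matrix.smul_cons]
    have := ((hH2.pow 3).C_mul (-2 ^ 8)).eval_smul_div_eval_smul (n := 6)
      ((hF3.pow 2).C_mul (algebraMap (𝓞 K) K Δ)) hξ ![x, y]
    simpa only [hj, hv, eval_mul, eval_C, eval_pow] using this
  obtain ⟨𝒞, h𝒞, h𝒞HK⟩ : ∃ 𝒞 : Set (Ideal (𝓞 K)),
      (∀ c, ∃ P ∈ 𝒞, ∃ hP : P ∈ (Ideal (𝓞 K))⁰, ClassGroup.mk0 ⟨P, hP⟩ = c) ∧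
      ∀ P ∈ 𝒞, (Nat.card (ClassGroup (𝓞 K)) = 1 → P = ⊤) ∧
        (Nat.card (ClassGroup (𝓞 K)) ≠ 1 → P ∈ HK) := by
    by_cases hcard : Nat.card (ClassGroup (𝓞 K)) = 1
    · have : Subsingleton (ClassGroup (𝓞 K)) := (Nat.card_eq_one_iff_unique.mp hcard).1
      refine ⟨{1}, fun c => ⟨1, rfl, one_mem _, Subsingleton.elim _ _⟩, ?_⟩
      rintro P rfl
      exact ⟨fun _ => Ideal.one_eq_top, fun h => absurd hcard h⟩
    · exact ⟨HK, hHKrep hcard, fun P hP => ⟨fun h => absurd h hcard, fun _ => hP⟩⟩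
  obtain ⟨ξ, hξ, x₂, y₂, hx₂, hy₂, hmem⟩ := ClassGroup.exists_mul_span_pair_mem h𝒞 hxy
  refine ⟨ξ, hξ, x₂, y₂, hx₂, hy₂, h𝒞HK _ hmem, fun v hv => ?_⟩
  rw [hx₂, hy₂, hj_smul ξ hξ]
  exact hcond v hv

/-- **Scaling to an almost-coprime integral pair.** Let `K` be a number field,
`F ∈ 𝓞 K[x,y]` a binary cubic with nonzero discriminant `Δ_F`, and `S_F` a set of finite
primes containing the class-group representative primes `𝓗_K` and the primes dividing
`2Δ_F`. Suppose for some `x₁, y₁ ∈ K` (not both zero) the Frey curve `E_{x₁,y₁}` has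
conductor supported on `S_F` (equivalently, since these curves are semistable outside
`S_F`, its `j`-invariant `j(x₁,y₁) = -2⁸H(x₁,y₁)³/(Δ_F F(x₁,y₁)²)` is integral at every
prime outside `S_F`). Then there is `ξ ∈ K^×` with `ξx₁, ξy₁ ∈ 𝓞 K`, the ideal
`gcd(ξx₁𝓞 K, ξy₁𝓞 K)` trivial (if `h_K = 1`) or a prime of `𝓗_K` (if `h_K > 1`), and the
conductor of `E_{ξx₁, ξy₁}` still supported on `S_F`. -/
theorem scale_frey_pair (K : Type*) [Field K] [NumberField K]
    (α₀ α₁ α₂ α₃ : 𝓞 K)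
    (F : MvPolynomial (Fin 2) K)
    (hF : F = C (algebraMap (𝓞 K) K α₀) * X 0 ^ 3 + C (algebraMap (𝓞 K) K α₁) * X 0 ^ 2 * X 1
      + C (algebraMap (𝓞 K) K α₂) * X 0 * X 1 ^ 2 + C (algebraMap (𝓞 K) K α₃) * X 1 ^ 3)
    (Δ : 𝓞 K)
    (hΔ : Δ = 18 * α₀ * α₁ * α₂ * α₃ + (α₁ * α₂) ^ 2 - 27 * (α₀ * α₃) ^ 2
      - 4 * α₀ * α₂ ^ 3 - 4 * α₁ ^ 3 * α₃)
    (hΔ0 : Δ ≠ 0)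
    (H : MvPolynomial (Fin 2) K)
    (hH : H = C (1 / 4 : K) *
      (pderiv 0 (pderiv 0 F) * pderiv 1 (pderiv 1 F) - pderiv 1 (pderiv 0 F) ^ 2))
    (j : K → K → K)
    (hj : ∀ x y : K, j x y = -2 ^ 8 * MvPolynomial.eval ![x, y] H ^ 3 /
      (algebraMap (𝓞 K) K Δ * MvPolynomial.eval ![x, y] F ^ 2))
    -- the chosen class-group representative primes `𝓗_K`, not dividing `2`
    (HK : Finset (Ideal (𝓞 K)))
    (hHKprime : ∀ P ∈ HK, P.IsPrime ∧ (2 : 𝓞 K) ∉ P)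
    (hHKrep : Nat.card (ClassGroup (𝓞 K)) ≠ 1 → ∀ c : ClassGroup (𝓞 K),
      ∃ P ∈ HK, ∃ hP : P ∈ (Ideal (𝓞 K))⁰, ClassGroup.mk0 ⟨P, hP⟩ = c)
    -- the set `S_F`
    (S : Set (HeightOneSpectrum (𝓞 K)))
    (hS2Δ : ∀ v : HeightOneSpectrum (𝓞 K), 2 * Δ ∈ v.asIdeal → v ∈ S)
    (hSHK : ∀ v : HeightOneSpectrum (𝓞 K), v.asIdeal ∈ HK → v ∈ S)
    (x₁ y₁ : K) (hxy : ¬(x₁ = 0 ∧ y₁ = 0))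
    (hF1 : MvPolynomial.eval ![x₁, y₁] F ≠ 0)
    -- the conductor of `E_{x₁,y₁}` is supported on `S_F`
    (hcond : ∀ v : HeightOneSpectrum (𝓞 K), v ∉ S → v.valuation K (j x₁ y₁) ≤ 1) :
    ∃ ξ : K, ξ ≠ 0 ∧ ∃ x₂ y₂ : 𝓞 K,
      algebraMap (𝓞 K) K x₂ = ξ * x₁ ∧ algebraMap (𝓞 K) K y₂ = ξ * y₁ ∧
      ((Nat.card (ClassGroup (𝓞 K)) = 1 → Ideal.span {x₂} ⊔ Ideal.span {y₂} = ⊤) ∧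
        (Nat.card (ClassGroup (𝓞 K)) ≠ 1 → Ideal.span {x₂} ⊔ Ideal.span {y₂} ∈ HK)) ∧
      (∀ v : HeightOneSpectrum (𝓞 K), v ∉ S →
        v.valuation K (j (algebraMap (𝓞 K) K x₂) (algebraMap (𝓞 K) K y₂)) ≤ 1) :=
  scale_frey_pair_general K α₀ α₁ α₂ α₃ F hF Δ H hH j hj HK hHKrep S x₁ y₁ hxy hcond
end
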